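/- Let Ω ⊆ ℂⁿ be a connected open set and (f_k) a sequence of holomorphic functions on Ω, each nowhere vanishing on Ω, converging uniformly on compact subsets of Ω to a holomorphic function f that is not identically zero. Then f is nowhere vanishing on Ω. -/
import Mathlib


open Filter Topology Metric

/-- Restriction of a holomorphic function to a complex line is holomorphic. -/
lemma hurwitz_line_diff {n : ℕ} {Ω : Set (Fin n → ℂ)} {g : (Fin n → ℂ) → ℂ}
    (holg : DifferentiableOn ℂ g Ω) (a v : Fin n → ℂ) {R : ℝ}
    (hsub : ∀ t : ℂ, t ∈ ball (0:ℂ) R → a + t • v ∈ Ω) :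
    DifferentiableOn ℂ (fun t : ℂ => g (a + t • v)) (ball (0:ℂ) R) := by
  have hline : Differentiable ℂ (fun t : ℂ => a + t • v) :=
    (differentiable_id.smul_const v).const_add a
  exact holg.comp hline.differentiableOn hsub

/-- Identity theorem in several variables, proved by restricting to lines:
if a holomorphic function on a connected open set vanishes in a neighborhood
of a point, it vanishes identically. -/
lemma hurwitz_eq_zero_of_locally_zero {n : ℕ} {Ω : Set (Fin n → ℂ)} (hΩ : IsOpen Ω)
    (hconn : IsPreconnected Ω) {g : (Fin n → ℂ) → ℂ} (holg : DifferentiableOn ℂ g Ω)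
    {c : Fin n → ℂ} (hc : c ∈ Ω) (h0 : ∀ᶠ w in 𝓝 c, g w = 0) :
    ∀ z ∈ Ω, g z = 0 := by
  set A : Set (Fin n → ℂ) := {z | ∀ᶠ w in 𝓝 z, g w = 0} with hA
  have hAopen : IsOpen A := by
    rw [isOpen_iff_mem_nhds]
    intro z hz
    exact hz.eventually_nhds
  have hkey : closure A ∩ Ω ⊆ A := by
    rintro z ⟨hzA, hzΩ⟩
    obtain ⟨ε, hε, hball⟩ := Metric.isOpen_iff.1 hΩ z hzΩ
    obtain ⟨w, hwA, hwd⟩ := Metric.mem_closure_iff.1 hzA (ε/4) (by linarith)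
    have key : ∀ p ∈ ball z (ε/4), g p = 0 := by
      intro p hp
      by_cases hpw : p = w
      · exact hpw ▸ hwA.self_of_nhds
      set v : Fin n → ℂ := p - w with hv
      have hvne : v ≠ 0 := sub_ne_zero.2 hpw
      have hvpos : 0 < ‖v‖ := norm_pos_iff.2 hvne
      set R : ℝ := (ε/2) / ‖v‖ with hR
      have hvlt : ‖v‖ < ε/2 := by
        have h1 : ‖p - z‖ < ε/4 := mem_ball_iff_norm.1 hp
        have h2 : ‖z - w‖ < ε/4 := by rwa [← dist_eq_norm]
        calc ‖v‖ = ‖(p - z) + (z - w)‖ := by rw [hv]; ring_nf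
          _ ≤ ‖p - z‖ + ‖z - w‖ := norm_add_le _ _
          _ < ε/4 + ε/4 := by linarith
          _ = ε/2 := by ring
      have hR1 : 1 < R := (one_lt_div hvpos).2 hvlt
      have hsub : ∀ t : ℂ, t ∈ ball (0:ℂ) R → w + t • v ∈ Ω := by
        intro t ht
        apply hball
        have htn : ‖t‖ < R := by simpa using mem_ball_iff_norm.1 ht
        rw [mem_ball_iff_norm]
        have hwz : ‖w - z‖ < ε/4 := by rw [← dist_eq_norm, dist_comm]; exact hwd
        calc ‖w + t • v - z‖ = ‖(w - z) + t • v‖ := by ring_nf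
          _ ≤ ‖w - z‖ + ‖t • v‖ := norm_add_le _ _
          _ = ‖w - z‖ + ‖t‖ * ‖v‖ := by rw [norm_smul]
          _ < ε/4 + R * ‖v‖ := by
              have := mul_lt_mul_of_pos_right htn hvpos
              linarith
          _ = ε/4 + ε/2 := by rw [hR, div_mul_cancel₀]; exact ne_of_gt hvpos
          _ < ε := by linarith
      have hdiff : DifferentiableOn ℂ (fun t : ℂ => g (w + t • v)) (ball (0:ℂ) R) :=
        hurwitz_line_diff holg w v hsub
      have hanal : AnalyticOnNhd ℂ (fun t : ℂ => g (w + t • v)) (ball (0:ℂ) R) :=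
        hdiff.analyticOnNhd isOpen_ball
      have hev : (fun t : ℂ => g (w + t • v)) =ᶠ[𝓝 0] 0 := by
        have hcont : Filter.Tendsto (fun t : ℂ => w + t • v) (𝓝 0) (𝓝 w) := by
          have hct : Continuous (fun t : ℂ => w + t • v) :=
            continuous_const.add (continuous_id.smul continuous_const)
          simpa using hct.tendsto 0
        exact hcont.eventually hwA
      have h0ball : (0:ℂ) ∈ ball (0:ℂ) R := by
        rw [mem_ball, dist_self, hR]; positivity
      have heq := hanal.eqOn_zero_of_preconnected_of_eventuallyEq_zero
        (convex_ball (0:ℂ) R).isPreconnected h0ball hev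
      have h1ball : (1:ℂ) ∈ ball (0:ℂ) R := by
        rw [mem_ball_iff_norm]; simpa using hR1
      have := heq h1ball
      simpa [hv] using this
    exact Filter.eventually_of_mem (ball_mem_nhds z (by linarith)) key
  have hΩA : Ω ⊆ A :=
    hconn.subset_of_closure_inter_subset hAopen ⟨c, hc, h0⟩ hkey
  intro z hz
  exact (hΩA hz).self_of_nhds

/-- Bochner's theorem (several-variables Hurwitz): a locally uniform limit of
nowhere-vanishing holomorphic functions on a connected open set `Ω ⊆ ℂⁿ`,
if not identically zero, is nowhere vanishing. -/
theorem hurwitz_several_vars {n : ℕ} (Ω : Set (Fin n → ℂ)) (hΩ : IsOpen Ω)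
    (hconn : IsConnected Ω)
    (f : ℕ → (Fin n → ℂ) → ℂ) (g : (Fin n → ℂ) → ℂ)
    (hol : ∀ k, DifferentiableOn ℂ (f k) Ω)
    (nv : ∀ k, ∀ z ∈ Ω, f k z ≠ 0)
    (holg : DifferentiableOn ℂ g Ω)
    (conv : ∀ K ⊆ Ω, IsCompact K → TendstoUniformlyOn f g atTop K)
    (hne : ∃ z ∈ Ω, g z ≠ 0) :
    ∀ z ∈ Ω, g z ≠ 0 := by
  intro a ha hga
  -- g does not vanish in a whole neighborhood of a
  have hnloc : ¬ (∀ᶠ w in 𝓝 a, g w = 0) := by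
    intro h
    obtain ⟨z, hz, hgz⟩ := hne
    exact hgz (hurwitz_eq_zero_of_locally_zero hΩ hconn.isPreconnected holg ha h z hz)
  obtain ⟨ε, hε, hball⟩ := Metric.isOpen_iff.1 hΩ a ha
  -- pick b near a with g b ≠ 0
  have hfreq : ∃ᶠ w in 𝓝 a, g w ≠ 0 := Filter.not_eventually.1 hnloc
  obtain ⟨b, hgb, hbd⟩ :=
    (hfreq.and_eventually (Metric.eventually_nhds_iff.2
      ⟨ε/2, by linarith, fun {y} hy => hy⟩)).exists
  set v : Fin n → ℂ := b - a with hv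
  have hvne : v ≠ 0 := by
    intro h
    apply hgb
    have hba : b = a := by rwa [hv, sub_eq_zero] at h
    rwa [hba]
  have hvpos : 0 < ‖v‖ := norm_pos_iff.2 hvne
  set R : ℝ := (3*ε/4) / ‖v‖ with hR
  have hvlt : ‖v‖ < ε/2 := by
    have := hbd
    rwa [dist_eq_norm, ← hv] at this
  have hR1 : 1 < R := by
    rw [hR, lt_div_iff₀ hvpos]
    linarith
  have hsub : ∀ t : ℂ, t ∈ ball (0:ℂ) R → a + t • v ∈ Ω := by
    intro t ht
    apply hball
    have htn : ‖t‖ < R := by simpa using mem_ball_iff_norm.1 ht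
    rw [mem_ball_iff_norm]
    have heq : ‖a + t • v - a‖ = ‖t‖ * ‖v‖ := by simp [norm_smul]
    rw [heq]
    calc ‖t‖ * ‖v‖ < R * ‖v‖ := mul_lt_mul_of_pos_right htn hvpos
      _ = 3*ε/4 := by rw [hR, div_mul_cancel₀]; exact ne_of_gt hvpos
      _ < ε := by linarith
  -- the one-variable restriction h along the line through a and b
  set L : ℂ → (Fin n → ℂ) := fun t => a + t • v with hL
  set h : ℂ → ℂ := fun t => g (L t) with hh
  have hdiff : DifferentiableOn ℂ h (ball (0:ℂ) R) := hurwitz_line_diff holg a v hsub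
  have hanal : AnalyticOnNhd ℂ h (ball (0:ℂ) R) := hdiff.analyticOnNhd isOpen_ball
  have h0ball : (0:ℂ) ∈ ball (0:ℂ) R := by
    rw [mem_ball, dist_self, hR]; positivity
  have h1ball : (1:ℂ) ∈ ball (0:ℂ) R := by
    rw [mem_ball_iff_norm]; simpa using hR1
  have hh1 : h 1 ≠ 0 := by
    simp only [hh, hL, hv, one_smul]
    simpa using hgb
  -- h is not eventually zero at 0, so by isolated zeros it is nonzero near 0
  have hnotev : ¬ (∀ᶠ t in 𝓝 (0:ℂ), h t = 0) := by
    intro hev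
    exact hh1 (hanal.eqOn_zero_of_preconnected_of_eventuallyEq_zero
      (convex_ball (0:ℂ) R).isPreconnected h0ball hev h1ball)
  have hpunct : ∀ᶠ t in 𝓝[≠] (0:ℂ), h t ≠ 0 :=
    ((hanal 0 h0ball).eventually_eq_zero_or_eventually_ne_zero).resolve_left hnotev
  obtain ⟨δ, hδ, hδne⟩ := Metric.eventually_nhds_iff.1 (eventually_nhdsWithin_iff.1 hpunct)
  -- choose the radius r of the circle
  set r : ℝ := min (δ/2) (1/2) with hr
  have hrpos : 0 < r := lt_min (by linarith) (by norm_num)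
  have hr1 : r < 1 := lt_of_le_of_lt (min_le_right _ _) (by norm_num)
  have hrδ : r < δ := lt_of_le_of_lt (min_le_left _ _) (by linarith)
  have hrR : r < R := lt_trans hr1 hR1
  have hsphere_ne : ∀ t ∈ sphere (0:ℂ) r, h t ≠ 0 := by
    intro t ht
    have htn : ‖t‖ = r := by simpa using ht
    have htne : t ≠ 0 := by
      intro h0; rw [h0, norm_zero] at htn; linarith
    exact hδne (by rw [dist_zero_right, htn]; exact hrδ) htne
  -- the minimum of ‖h‖ on the circle
  have hspc : IsCompact (sphere (0:ℂ) r) := isCompact_sphere 0 r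
  have hspn : (sphere (0:ℂ) r).Nonempty := NormedSpace.sphere_nonempty.2 hrpos.le
  have hsub' : sphere (0:ℂ) r ⊆ ball (0:ℂ) R :=
    sphere_subset_closedBall.trans (closedBall_subset_ball hrR)
  obtain ⟨t₀, ht₀, hmin⟩ := hspc.exists_isMinOn hspn
    ((hdiff.continuousOn.mono hsub').norm)
  set m : ℝ := ‖h t₀‖ with hm
  have hmpos : 0 < m := norm_pos_iff.2 (hsphere_ne t₀ ht₀)
  -- the compact set K : image of the closed disc
  have hLcont : Continuous L := continuous_const.add (continuous_id.smul continuous_const)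
  set K : Set (Fin n → ℂ) := L '' closedBall (0:ℂ) r with hK
  have hKcomp : IsCompact K := (isCompact_closedBall _ _).image hLcont
  have hKΩ : K ⊆ Ω := by
    rintro _ ⟨t, ht, rfl⟩
    exact hsub t ((closedBall_subset_ball hrR) ht)
  have hconvK := conv K hKΩ hKcomp
  have hL0 : L 0 = a := by simp [hL]
  have haK : a ∈ K := ⟨0, by simpa using hrpos.le, hL0⟩
  have hfa : Tendsto (fun k => f k a) atTop (𝓝 0) := by
    have := hconvK.tendsto_at haK
    rwa [hga] at this
  have h1ev : ∀ᶠ k in atTop, ‖f k a‖ < m/2 := by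
    have := Metric.tendsto_nhds.1 hfa (m/2) (by positivity)
    simpa [dist_zero_right] using this
  have h2ev : ∀ᶠ k in atTop, ∀ x ∈ K, dist (g x) (f k x) < m/2 :=
    Metric.tendstoUniformlyOn_iff.1 hconvK (m/2) (by positivity)
  obtain ⟨k, hk1, hk2⟩ := (h1ev.and h2ev).exists
  -- lower bound for ‖f k (L t)‖ on the circle
  have hlow : ∀ t ∈ sphere (0:ℂ) r, m/2 ≤ ‖f k (L t)‖ := by
    intro t ht
    have hmt : m ≤ ‖h t‖ := hmin ht
    have hKt : L t ∈ K := ⟨t, sphere_subset_closedBall ht, rfl⟩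
    have hd := hk2 (L t) hKt
    rw [dist_eq_norm] at hd
    have hns := norm_sub_norm_le (g (L t)) (f k (L t))
    have hgh : g (L t) = h t := rfl
    rw [hgh] at hd hns
    linarith
  -- maximum modulus principle for the inverse of f k restricted to the line
  set F : ℂ → ℂ := fun t => (f k (L t))⁻¹ with hF
  have hFdiff : DifferentiableOn ℂ F (ball (0:ℂ) R) := by
    have := hurwitz_line_diff (hol k) a v hsub
    exact this.inv (fun t ht => nv k _ (hsub t ht))
  have hFcl : DiffContOnCl ℂ F (ball (0:ℂ) r) := by
    refine ⟨hFdiff.mono (ball_subset_ball hrR.le), ?_⟩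
    rw [closure_ball _ hrpos.ne']
    exact (hFdiff.mono (closedBall_subset_ball hrR)).continuousOn
  have hfront : ∀ z ∈ frontier (ball (0:ℂ) r), ‖F z‖ ≤ (m/2)⁻¹ := by
    rw [frontier_ball _ hrpos.ne']
    intro t ht
    rw [hF, norm_inv]
    exact inv_anti₀ (by positivity) (hlow t ht)
  have h0cl : (0:ℂ) ∈ closure (ball (0:ℂ) r) := subset_closure (mem_ball_self hrpos)
  have hmax := Complex.norm_le_of_forall_mem_frontier_norm_le
    isBounded_ball hFcl hfront h0cl
  have hfka : f k a ≠ 0 := nv k a ha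
  have hF0 : ‖F 0‖ = ‖f k a‖⁻¹ := by simp only [hF]; rw [hL0, norm_inv]
  rw [hF0] at hmax
  have hnormpos : 0 < ‖f k a‖ := norm_pos_iff.2 hfka
  have : m/2 ≤ ‖f k a‖ := by
    have := (inv_le_inv₀ hnormpos (by positivity)).1 hmax
    linarith
  linarith
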